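/- arXiv:1412.6803 — 2 statements merged into one kernel-verified Lean document; each statement's English description precedes it below -/
import Mathlib

section
/- Let k ≥ 12 be an integer and let G be a finite simple graph with Δ(G) ≤ k. Suppose G contains a vertex v of degree 5 having at least three neighbors of degree at most 8. If G − v admits an incidence (k+6, 6)-coloring, then G admits an incidence (k+6, 6)-coloring. -/
open SimpleGraph

/-- An incidence coloring of `G` with `n` colors, where `φ v u` is the color of the
incidence `(v, vu)` (meaningful when `G.Adj v u`): two distinct adjacent incidences
`(v, vu)` and `(w, wx)` receive distinct colors. Incidences `(v, e)` and `(w, f)` are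
adjacent if `v = w`, or `e = f`, or the edge `vw` equals `e` or `f`. -/
def IsIncidenceColoring {V : Type*} (G : SimpleGraph V) {n : ℕ} (φ : V → V → Fin n) : Prop :=
  ∀ ⦃v u w x : V⦄, G.Adj v u → G.Adj w x → (v, u) ≠ (w, x) →
    (v = w ∨ s(v, u) = s(w, x) ∨ s(v, w) = s(v, u) ∨ s(v, w) = s(w, x)) →
    φ v u ≠ φ w x

/-- `G` admits an incidence `(n, ℓ)`-coloring: an incidence coloring with `n` colors such
that for every vertex `v`, at most `ℓ` distinct colors appear on the incidences of the
form `(u, uv)` where `u` ranges over the neighbors of `v`. -/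
def HasIncidenceColoring {V : Type*} (G : SimpleGraph V) (n ℓ : ℕ) : Prop :=
  ∃ φ : V → V → Fin n, IsIncidenceColoring G φ ∧
    ∀ v : V, ({c : Fin n | ∃ u : V, G.Adj u v ∧ φ u v = c}).ncard ≤ ℓ

/-- The incidence chromatic number: the least `n` such that `G` admits an incidence
`n`-coloring. -/
noncomputable def incChromaticNumber {V : Type*} (G : SimpleGraph V) : ℕ :=
  sInf {n : ℕ | ∃ φ : V → V → Fin n, IsIncidenceColoring G φ}

/-- `mad(G) < q`: every nonempty subgraph `H` of `G` satisfies `2|E(H)| < q·|V(H)|`. -/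
def MadLT {V : Type*} (G : SimpleGraph V) (q : ℝ) : Prop :=
  ∀ H : G.Subgraph, H.verts.Nonempty →
    (2 * H.edgeSet.ncard : ℝ) < q * H.verts.ncard

set_option maxHeartbeats 2000000 in
theorem incidence_extend_five_vertex_three_small {V : Type*} [Fintype V] [DecidableEq V]
    (G : SimpleGraph V) [DecidableRel G.Adj] (k : ℕ) (hk : 12 ≤ k) (hΔ : G.maxDegree ≤ k)
    (v : V) (hdv : G.degree v = 5)
    (hnb : 3 ≤ ((G.neighborFinset v).filter (fun w => G.degree w ≤ 8)).card)
    (hcol : HasIncidenceColoring (G.induce ({v}ᶜ : Set V)) (k + 6) 6) :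
    HasIncidenceColoring G (k + 6) 6 := by
  classical
  obtain ⟨φ₀, hφc, hφℓ⟩ := hcol
  have hkpos : 0 < k + 6 := by omega
  -- transported old coloring
  set φ' : V → V → Fin (k+6) := fun x y =>
    if hx : x = v then ⟨0, hkpos⟩ else if hy : y = v then ⟨0, hkpos⟩
    else φ₀ ⟨x, Set.mem_compl_singleton_iff.mpr hx⟩ ⟨y, Set.mem_compl_singleton_iff.mpr hy⟩
    with hφ'def
  have hφ'eq : ∀ (x y : V) (hx : x ≠ v) (hy : y ≠ v),
      φ' x y = φ₀ ⟨x, Set.mem_compl_singleton_iff.mpr hx⟩ ⟨y, Set.mem_compl_singleton_iff.mpr hy⟩ := by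
    intro x y hx hy; simp [hφ'def, hx, hy]
  -- the old coloring property, in V-terms
  have hold : ∀ p q r s : V, p ≠ v → q ≠ v → r ≠ v → s ≠ v → G.Adj p q → G.Adj r s →
      (p, q) ≠ (r, s) →
      (p = r ∨ s(p, q) = s(r, s) ∨ s(p, r) = s(p, q) ∨ s(p, r) = s(r, s)) →
      φ' p q ≠ φ' r s := by
    intro p q r s hp hq hr hs hpq hrs hne hdis
    rw [hφ'eq p q hp hq, hφ'eq r s hr hs]
    apply hφc (by exact hpq) (by exact hrs)
    · intro hh
      apply hne
      rw [Prod.ext_iff] at hh ⊢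
      exact ⟨congrArg Subtype.val hh.1, congrArg Subtype.val hh.2⟩
    · simpa [Sym2.eq_iff, Subtype.ext_iff] using hdis
  -- neighborhoods and color sets
  set NB : V → Finset V := fun u => (G.neighborFinset u).erase v with hNBdef
  set A : V → Finset (Fin (k+6)) := fun u => (NB u).image (fun x => φ' u x) with hAdef
  set B : V → Finset (Fin (k+6)) := fun u => (NB u).image (fun x => φ' x u) with hBdef
  have hNBmem : ∀ {u x : V}, G.Adj u x → x ≠ v → x ∈ NB u := by
    intro u x h hx
    simp [hNBdef, hx, G.mem_neighborFinset, h]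
  have hAmem : ∀ {u x : V}, G.Adj u x → x ≠ v → φ' u x ∈ A u := by
    intro u x h hx
    exact Finset.mem_image_of_mem _ (hNBmem h hx)
  have hBmem : ∀ {u x : V}, G.Adj u x → x ≠ v → φ' x u ∈ B u := by
    intro u x h hx
    exact Finset.mem_image_of_mem _ (hNBmem h hx)
  have hdeg : ∀ u : V, G.degree u ≤ k := fun u => (G.degree_le_maxDegree u).trans hΔ
  have hAcard : ∀ u : V, G.Adj v u → (A u).card ≤ G.degree u - 1 := by
    intro u hu
    refine Finset.card_image_le.trans ?_
    have hv : v ∈ G.neighborFinset u := by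
      rw [G.mem_neighborFinset]; exact hu.symm
    rw [hNBdef]
    rw [Finset.card_erase_of_mem hv, G.card_neighborFinset_eq_degree]
  have hBcard : ∀ u : V, u ≠ v → (B u).card ≤ 6 := by
    intro u hu
    have hsub : (↑(B u) : Set (Fin (k+6))) ⊆
        {c : Fin (k+6) | ∃ x, (G.induce ({v}ᶜ : Set V)).Adj x
          ⟨u, Set.mem_compl_singleton_iff.mpr hu⟩ ∧
          φ₀ x ⟨u, Set.mem_compl_singleton_iff.mpr hu⟩ = c} := by
      intro c hc
      rw [Finset.mem_coe, hBdef] at hc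
      simp only [Finset.mem_image] at hc
      obtain ⟨x, hxNB, hxc⟩ := hc
      rw [hNBdef] at hxNB
      simp only [Finset.mem_erase, G.mem_neighborFinset] at hxNB
      obtain ⟨hxv, hxadj⟩ := hxNB
      refine ⟨⟨x, Set.mem_compl_singleton_iff.mpr hxv⟩, by exact hxadj.symm, ?_⟩
      rw [← hxc, hφ'eq x u hxv hu]
    calc (B u).card = (↑(B u) : Set (Fin (k+6))).ncard := (Set.ncard_coe_finset _).symm
      _ ≤ _ := Set.ncard_le_ncard hsub (Set.toFinite _)
      _ ≤ 6 := hφℓ _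
  have hABdisj : ∀ u : V, u ≠ v → Disjoint (A u) (B u) := by
    intro u hu
    rw [Finset.disjoint_left]
    intro c hcA hcB
    rw [hAdef] at hcA
    rw [hBdef] at hcB
    simp only [Finset.mem_image] at hcA hcB
    obtain ⟨x, hxNB, hxc⟩ := hcA
    obtain ⟨y, hyNB, hyc⟩ := hcB
    rw [hNBdef] at hxNB hyNB
    simp only [Finset.mem_erase, G.mem_neighborFinset] at hxNB hyNB
    refine hold u x y u hu hxNB.1 hyNB.1 hu hxNB.2 hyNB.2.symm ?_ ?_ (by rw [hxc, hyc])
    · intro hh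
      rw [Prod.ext_iff] at hh
      exact hxNB.2.ne' hh.2
    · exact Or.inr (Or.inr (Or.inr (Sym2.eq_swap)))
  -- choice helpers
  have pick : ∀ F : Finset (Fin (k+6)), F.card < k + 6 → ∃ c, c ∉ F := by
    intro F hF
    have h1 : (Fᶜ).card = (k+6) - F.card := by simp [Finset.card_compl]
    have h2 : 0 < (Fᶜ).card := by omega
    obtain ⟨c, hc⟩ := Finset.card_pos.mp h2
    exact ⟨c, by simpa using hc⟩
  have pickA : ∀ (Au Bu F : Finset (Fin (k+6))), Disjoint Au Bu → Bu.card ≤ 6 →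
      Au.card + F.card < k + 6 → (Bu ∩ F).card < 6 →
      ∃ c, c ∉ Au ∧ c ∉ F ∧ (Bu ∪ {c}).card ≤ 6 := by
    intro Au Bu F hdisj hB6 hcard hBF
    by_cases hB5 : Bu.card ≤ 5
    · obtain ⟨c, hc⟩ := pick (Au ∪ F) (lt_of_le_of_lt (Finset.card_union_le _ _) hcard)
      refine ⟨c, fun h => hc (Finset.mem_union_left _ h),
        fun h => hc (Finset.mem_union_right _ h), ?_⟩
      calc (Bu ∪ {c}).card ≤ Bu.card + ({c} : Finset _).card := Finset.card_union_le _ _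
        _ ≤ 6 := by simp; omega
    · have hs : (Bu \ F).Nonempty := by
        rw [← Finset.card_pos]
        have h1 : (Bu ∩ F).card + (Bu \ F).card = Bu.card := Finset.card_inter_add_card_sdiff _ _
        omega
      obtain ⟨c, hc⟩ := hs
      rw [Finset.mem_sdiff] at hc
      refine ⟨c, fun h => Finset.disjoint_left.mp hdisj h hc.1, hc.2, ?_⟩
      have : Bu ∪ {c} = Bu := by
        rw [Finset.union_eq_left]
        simpa using hc.1
      rw [this]; exact hB6
  -- extract the five neighbors, small ones first
  obtain ⟨T, hTsub, hTcard⟩ := Finset.exists_subset_card_eq hnb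
  have hTN : T ⊆ G.neighborFinset v := hTsub.trans (Finset.filter_subset _ _)
  obtain ⟨s₁, s₂, s₃, hs12, hs13, hs23, hTeq⟩ := Finset.card_eq_three.mp hTcard
  have hRcard : ((G.neighborFinset v) \ T).card = 2 := by
    rw [Finset.card_sdiff_of_subset hTN, G.card_neighborFinset_eq_degree, hdv, hTcard]
  obtain ⟨t₁, t₂, ht12, hReq⟩ := Finset.card_eq_two.mp hRcard
  -- basic membership facts
  have hsmem : ∀ u ∈ T, G.Adj v u ∧ G.degree u ≤ 8 := by
    intro u hu
    have := hTsub hu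
    simp only [Finset.mem_filter, G.mem_neighborFinset] at this
    exact this
  have htmem : ∀ u ∈ ((G.neighborFinset v) \ T), G.Adj v u := by
    intro u hu
    have := (Finset.mem_sdiff.mp hu).1
    rwa [G.mem_neighborFinset] at this
  have hs₁T : s₁ ∈ T := by rw [hTeq]; simp
  have hs₂T : s₂ ∈ T := by rw [hTeq]; simp
  have hs₃T : s₃ ∈ T := by rw [hTeq]; simp
  have ht₁R : t₁ ∈ (G.neighborFinset v) \ T := by rw [hReq]; simp
  have ht₂R : t₂ ∈ (G.neighborFinset v) \ T := by rw [hReq]; simp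
  have hadj₁ : G.Adj v s₁ := (hsmem s₁ hs₁T).1
  have hadj₂ : G.Adj v s₂ := (hsmem s₂ hs₂T).1
  have hadj₃ : G.Adj v s₃ := (hsmem s₃ hs₃T).1
  have hadjt₁ : G.Adj v t₁ := htmem t₁ ht₁R
  have hadjt₂ : G.Adj v t₂ := htmem t₂ ht₂R
  have hdeg₁ : G.degree s₁ ≤ 8 := (hsmem s₁ hs₁T).2
  have hdeg₂ : G.degree s₂ ≤ 8 := (hsmem s₂ hs₂T).2
  have hdeg₃ : G.degree s₃ ≤ 8 := (hsmem s₃ hs₃T).2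
  have hst : ∀ i ∈ T, ∀ j ∈ (G.neighborFinset v) \ T, i ≠ j := by
    intro i hi j hj hij
    exact (Finset.mem_sdiff.mp hj).2 (hij ▸ hi)
  have hs1t1 : s₁ ≠ t₁ := hst s₁ hs₁T t₁ ht₁R
  have hs1t2 : s₁ ≠ t₂ := hst s₁ hs₁T t₂ ht₂R
  have hs2t1 : s₂ ≠ t₁ := hst s₂ hs₂T t₁ ht₁R
  have hs2t2 : s₂ ≠ t₂ := hst s₂ hs₂T t₂ ht₂R
  have hs3t1 : s₃ ≠ t₁ := hst s₃ hs₃T t₁ ht₁R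
  have hs3t2 : s₃ ≠ t₂ := hst s₃ hs₃T t₂ ht₂R
  have hvne : ∀ u : V, G.Adj v u → u ≠ v := fun u h => h.ne'
  have hs₁v : s₁ ≠ v := hvne _ hadj₁
  have hs₂v : s₂ ≠ v := hvne _ hadj₂
  have hs₃v : s₃ ≠ v := hvne _ hadj₃
  have ht₁v : t₁ ≠ v := hvne _ hadjt₁
  have ht₂v : t₂ ≠ v := hvne _ hadjt₂
  have hmem5 : ∀ u ∈ G.neighborFinset v, u = s₁ ∨ u = s₂ ∨ u = s₃ ∨ u = t₁ ∨ u = t₂ := by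
    intro u hu
    by_cases hT : u ∈ T
    · rw [hTeq] at hT
      simp only [Finset.mem_insert, Finset.mem_singleton] at hT
      tauto
    · have : u ∈ (G.neighborFinset v) \ T := Finset.mem_sdiff.mpr ⟨hu, hT⟩
      rw [hReq] at this
      simp only [Finset.mem_insert, Finset.mem_singleton] at this
      tauto
  -- cardinality of small literal finsets
  have c2 : ∀ x y : Fin (k+6), ({x,y} : Finset (Fin (k+6))).card ≤ 2 := by
    intro x y; exact (Finset.card_insert_le _ _).trans (by simp)
  have c3 : ∀ x y z : Fin (k+6), ({x,y,z} : Finset (Fin (k+6))).card ≤ 3 := by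
    intro x y z; have := c2 y z; exact (Finset.card_insert_le _ _).trans (by omega)
  have c4 : ∀ x y z w : Fin (k+6), ({x,y,z,w} : Finset (Fin (k+6))).card ≤ 4 := by
    intro x y z w; have := c3 y z w; exact (Finset.card_insert_le _ _).trans (by omega)
  have c5 : ∀ x y z w x' : Fin (k+6), ({x,y,z,w,x'} : Finset (Fin (k+6))).card ≤ 5 := by
    intro x y z w x'; have := c4 y z w x'; exact (Finset.card_insert_le _ _).trans (by omega)
  have c6 : ∀ x y z w x' y' : Fin (k+6), ({x,y,z,w,x',y'} : Finset (Fin (k+6))).card ≤ 6 := by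
    intro x y z w x' y'; have := c5 y z w x' y'; exact (Finset.card_insert_le _ _).trans (by omega)
  -- choose colors for incidences (t₁, t₁v) and (t₂, t₂v)
  obtain ⟨bt₁, hbt₁⟩ := pick (A t₁ ∪ B t₁) (by
    have h1 := hAcard t₁ hadjt₁; have h2 := hBcard t₁ ht₁v
    have h3 := hdeg t₁; have h4 := Finset.card_union_le (A t₁) (B t₁); omega)
  obtain ⟨bt₂, hbt₂⟩ := pick (A t₂ ∪ B t₂) (by
    have h1 := hAcard t₂ hadjt₂; have h2 := hBcard t₂ ht₂v
    have h3 := hdeg t₂; have h4 := Finset.card_union_le (A t₂) (B t₂); omega)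
  simp only [Finset.mem_union, not_or] at hbt₁ hbt₂
  obtain ⟨hbt₁A, hbt₁B⟩ := hbt₁
  obtain ⟨hbt₂A, hbt₂B⟩ := hbt₂
  -- choose colors for incidences (v, vu) for the five neighbors, in order s₁ s₂ s₃ t₁ t₂
  obtain ⟨a₁, ha₁A, ha₁F, ha₁B6⟩ := pickA (A s₁) (B s₁) {bt₁, bt₂}
    (hABdisj s₁ hs₁v) (hBcard s₁ hs₁v)
    (by have h1 := hAcard s₁ hadj₁; have h2 := hdeg s₁; have h3 := c2 bt₁ bt₂; omega)
    (by have h1 : (B s₁ ∩ ({bt₁, bt₂} : Finset (Fin (k+6)))).card ≤ ({bt₁, bt₂} : Finset (Fin (k+6))).card :=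
          Finset.card_le_card Finset.inter_subset_right
        have h2 := c2 bt₁ bt₂; omega)
  obtain ⟨a₂, ha₂A, ha₂F, ha₂B6⟩ := pickA (A s₂) (B s₂) {a₁, bt₁, bt₂}
    (hABdisj s₂ hs₂v) (hBcard s₂ hs₂v)
    (by have h1 := hAcard s₂ hadj₂; have h2 := hdeg s₂; have h3 := c3 a₁ bt₁ bt₂; omega)
    (by have h1 : (B s₂ ∩ ({a₁, bt₁, bt₂} : Finset (Fin (k+6)))).card ≤ ({a₁, bt₁, bt₂} : Finset (Fin (k+6))).card :=
          Finset.card_le_card Finset.inter_subset_right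
        have h2 := c3 a₁ bt₁ bt₂; omega)
  obtain ⟨a₃, ha₃A, ha₃F, ha₃B6⟩ := pickA (A s₃) (B s₃) {a₁, a₂, bt₁, bt₂}
    (hABdisj s₃ hs₃v) (hBcard s₃ hs₃v)
    (by have h1 := hAcard s₃ hadj₃; have h2 := hdeg s₃; have h3 := c4 a₁ a₂ bt₁ bt₂; omega)
    (by have h1 : (B s₃ ∩ ({a₁, a₂, bt₁, bt₂} : Finset (Fin (k+6)))).card ≤ ({a₁, a₂, bt₁, bt₂} : Finset (Fin (k+6))).card :=
          Finset.card_le_card Finset.inter_subset_right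
        have h2 := c4 a₁ a₂ bt₁ bt₂; omega)
  obtain ⟨a₄, ha₄A, ha₄F, ha₄B6⟩ := pickA (A t₁) (B t₁) {a₁, a₂, a₃, bt₁, bt₂}
    (hABdisj t₁ ht₁v) (hBcard t₁ ht₁v)
    (by have h1 := hAcard t₁ hadjt₁; have h2 := hdeg t₁
        have h3 := c5 a₁ a₂ a₃ bt₁ bt₂; omega)
    (by have h1 : (B t₁ ∩ ({a₁, a₂, a₃, bt₁, bt₂} : Finset (Fin (k+6)))).card ≤ ({a₁, a₂, a₃, bt₁, bt₂} : Finset (Fin (k+6))).card :=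
          Finset.card_le_card Finset.inter_subset_right
        have h2 := c5 a₁ a₂ a₃ bt₁ bt₂; omega)
  obtain ⟨a₅, ha₅A, ha₅F, ha₅B6⟩ := pickA (A t₂) (B t₂) {a₁, a₂, a₃, a₄, bt₁, bt₂}
    (hABdisj t₂ ht₂v) (hBcard t₂ ht₂v)
    (by have h1 := hAcard t₂ hadjt₂; have h2 := hdeg t₂
        have h3 := c6 a₁ a₂ a₃ a₄ bt₁ bt₂; omega)
    (by
      have hsub : B t₂ ∩ ({a₁, a₂, a₃, a₄, bt₁, bt₂} : Finset (Fin (k+6))) ⊆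
          ({a₁, a₂, a₃, a₄, bt₁} : Finset (Fin (k+6))) := by
        intro c hc
        simp only [Finset.mem_inter, Finset.mem_insert, Finset.mem_singleton] at hc ⊢
        obtain ⟨hcB, h⟩ := hc
        rcases h with h|h|h|h|h|h
        · exact Or.inl h
        · exact Or.inr (Or.inl h)
        · exact Or.inr (Or.inr (Or.inl h))
        · exact Or.inr (Or.inr (Or.inr (Or.inl h)))
        · exact Or.inr (Or.inr (Or.inr (Or.inr h)))
        · exact absurd (h ▸ hcB) hbt₂B
      have h1 := Finset.card_le_card hsub
      have h2 := c5 a₁ a₂ a₃ a₄ bt₁; omega)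
  simp only [Finset.mem_insert, Finset.mem_singleton, not_or] at ha₁F ha₂F ha₃F ha₄F ha₅F
  obtain ⟨ha₁bt₁, ha₁bt₂⟩ := ha₁F
  obtain ⟨ha₂a₁, ha₂bt₁, ha₂bt₂⟩ := ha₂F
  obtain ⟨ha₃a₁, ha₃a₂, ha₃bt₁, ha₃bt₂⟩ := ha₃F
  obtain ⟨ha₄a₁, ha₄a₂, ha₄a₃, ha₄bt₁, ha₄bt₂⟩ := ha₄F
  obtain ⟨ha₅a₁, ha₅a₂, ha₅a₃, ha₅a₄, ha₅bt₁, ha₅bt₂⟩ := ha₅F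
  -- choose colors for incidences (s, sv) for the three small neighbors
  have hn18 : 18 ≤ k + 6 := by omega
  obtain ⟨bs₁, hbs₁⟩ := pick (A s₁ ∪ (B s₁ ∪ {a₁}) ∪ {a₂, a₃, a₄, a₅}) (by
    have h1 := hAcard s₁ hadj₁
    have h2 := Finset.card_union_le (A s₁ ∪ (B s₁ ∪ {a₁})) ({a₂, a₃, a₄, a₅} : Finset (Fin (k+6)))
    have h3 := Finset.card_union_le (A s₁) (B s₁ ∪ {a₁})
    have h4 := c4 a₂ a₃ a₄ a₅; omega)
  obtain ⟨bs₂, hbs₂⟩ := pick (A s₂ ∪ (B s₂ ∪ {a₂}) ∪ {a₁, a₃, a₄, a₅}) (by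
    have h1 := hAcard s₂ hadj₂
    have h2 := Finset.card_union_le (A s₂ ∪ (B s₂ ∪ {a₂})) ({a₁, a₃, a₄, a₅} : Finset (Fin (k+6)))
    have h3 := Finset.card_union_le (A s₂) (B s₂ ∪ {a₂})
    have h4 := c4 a₁ a₃ a₄ a₅; omega)
  obtain ⟨bs₃, hbs₃⟩ := pick (A s₃ ∪ (B s₃ ∪ {a₃}) ∪ {a₁, a₂, a₄, a₅}) (by
    have h1 := hAcard s₃ hadj₃
    have h2 := Finset.card_union_le (A s₃ ∪ (B s₃ ∪ {a₃})) ({a₁, a₂, a₄, a₅} : Finset (Fin (k+6)))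
    have h3 := Finset.card_union_le (A s₃) (B s₃ ∪ {a₃})
    have h4 := c4 a₁ a₂ a₄ a₅; omega)
  simp only [Finset.mem_union, Finset.mem_insert, Finset.mem_singleton, not_or]
    at hbs₁ hbs₂ hbs₃
  obtain ⟨⟨hbs₁A, hbs₁B, hbs₁a₁⟩, hbs₁a₂, hbs₁a₃, hbs₁a₄, hbs₁a₅⟩ := hbs₁
  obtain ⟨⟨hbs₂A, hbs₂B, hbs₂a₂⟩, hbs₂a₁, hbs₂a₃, hbs₂a₄, hbs₂a₅⟩ := hbs₂
  obtain ⟨⟨hbs₃A, hbs₃B, hbs₃a₃⟩, hbs₃a₁, hbs₃a₂, hbs₃a₄, hbs₃a₅⟩ := hbs₃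
  -- the new color functions
  set aa : V → Fin (k+6) := fun u =>
    if u = s₁ then a₁ else if u = s₂ then a₂ else if u = s₃ then a₃
    else if u = t₁ then a₄ else a₅ with haadef
  set bb : V → Fin (k+6) := fun u =>
    if u = s₁ then bs₁ else if u = s₂ then bs₂ else if u = s₃ then bs₃
    else if u = t₁ then bt₁ else bt₂ with hbbdef
  have eaa₁ : aa s₁ = a₁ := by simp [haadef]
  have eaa₂ : aa s₂ = a₂ := by simp [haadef, hs12.symm]
  have eaa₃ : aa s₃ = a₃ := by simp [haadef, hs13.symm, hs23.symm]
  have eaa₄ : aa t₁ = a₄ := by simp [haadef, hs1t1.symm, hs2t1.symm, hs3t1.symm]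
  have eaa₅ : aa t₂ = a₅ := by simp [haadef, hs1t2.symm, hs2t2.symm, hs3t2.symm, ht12.symm]
  have ebb₁ : bb s₁ = bs₁ := by simp [hbbdef]
  have ebb₂ : bb s₂ = bs₂ := by simp [hbbdef, hs12.symm]
  have ebb₃ : bb s₃ = bs₃ := by simp [hbbdef, hs13.symm, hs23.symm]
  have ebb₄ : bb t₁ = bt₁ := by simp [hbbdef, hs1t1.symm, hs2t1.symm, hs3t1.symm]
  have ebb₅ : bb t₂ = bt₂ := by simp [hbbdef, hs1t2.symm, hs2t2.symm, hs3t2.symm, ht12.symm]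
  -- uniform facts about the new colors
  have hNmem : ∀ {u : V}, G.Adj v u → u ∈ G.neighborFinset v := by
    intro u h; rw [G.mem_neighborFinset]; exact h
  have Pmem : ∀ u, G.Adj v u →
      aa u ∉ A u ∧ (B u ∪ {aa u}).card ≤ 6 ∧ bb u ∉ A u ∧ bb u ∉ B u := by
    intro u hu
    rcases hmem5 u (hNmem hu) with rfl|rfl|rfl|rfl|rfl
    · rw [eaa₁, ebb₁]; exact ⟨ha₁A, ha₁B6, hbs₁A, hbs₁B⟩
    · rw [eaa₂, ebb₂]; exact ⟨ha₂A, ha₂B6, hbs₂A, hbs₂B⟩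
    · rw [eaa₃, ebb₃]; exact ⟨ha₃A, ha₃B6, hbs₃A, hbs₃B⟩
    · rw [eaa₄, ebb₄]; exact ⟨ha₄A, ha₄B6, hbt₁A, hbt₁B⟩
    · rw [eaa₅, ebb₅]; exact ⟨ha₅A, ha₅B6, hbt₂A, hbt₂B⟩
  have Paa : ∀ u u', G.Adj v u → G.Adj v u' → u ≠ u' → aa u ≠ aa u' := by
    intro u u' hu hu' hne
    rcases hmem5 u (hNmem hu) with rfl|rfl|rfl|rfl|rfl <;>
      rcases hmem5 u' (hNmem hu') with rfl|rfl|rfl|rfl|rfl <;>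
      simp only [eaa₁, eaa₂, eaa₃, eaa₄, eaa₅] <;>
      first
        | exact absurd rfl hne
        | exact Ne.symm ha₂a₁ | exact ha₂a₁ | exact Ne.symm ha₃a₁ | exact ha₃a₁
        | exact Ne.symm ha₃a₂ | exact ha₃a₂ | exact Ne.symm ha₄a₁ | exact ha₄a₁
        | exact Ne.symm ha₄a₂ | exact ha₄a₂ | exact Ne.symm ha₄a₃ | exact ha₄a₃
        | exact Ne.symm ha₅a₁ | exact ha₅a₁ | exact Ne.symm ha₅a₂ | exact ha₅a₂
        | exact Ne.symm ha₅a₃ | exact ha₅a₃ | exact Ne.symm ha₅a₄ | exact ha₅a₄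
  have Pab : ∀ u u', G.Adj v u → G.Adj v u' → aa u ≠ bb u' := by
    intro u u' hu hu'
    rcases hmem5 u (hNmem hu) with rfl|rfl|rfl|rfl|rfl <;>
      rcases hmem5 u' (hNmem hu') with rfl|rfl|rfl|rfl|rfl <;>
      simp only [eaa₁, eaa₂, eaa₃, eaa₄, eaa₅, ebb₁, ebb₂, ebb₃, ebb₄, ebb₅] <;>
      first
        | exact Ne.symm hbs₁a₁ | exact Ne.symm hbs₁a₂ | exact Ne.symm hbs₁a₃
        | exact Ne.symm hbs₁a₄ | exact Ne.symm hbs₁a₅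
        | exact Ne.symm hbs₂a₁ | exact Ne.symm hbs₂a₂ | exact Ne.symm hbs₂a₃
        | exact Ne.symm hbs₂a₄ | exact Ne.symm hbs₂a₅
        | exact Ne.symm hbs₃a₁ | exact Ne.symm hbs₃a₂ | exact Ne.symm hbs₃a₃
        | exact Ne.symm hbs₃a₄ | exact Ne.symm hbs₃a₅
        | exact ha₁bt₁ | exact ha₂bt₁ | exact ha₃bt₁ | exact ha₄bt₁ | exact ha₅bt₁
        | exact ha₁bt₂ | exact ha₂bt₂ | exact ha₃bt₂ | exact ha₄bt₂ | exact ha₅bt₂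

  -- the extended coloring
  set ψ : V → V → Fin (k+6) := fun x y =>
    if x = v then aa y else if y = v then bb x else φ' x y with hψdef
  have eψa : ∀ y, ψ v y = aa y := by intro y; simp [hψdef]
  have eψb : ∀ x, x ≠ v → ψ x v = bb x := by intro x hx; simp [hψdef, hx]
  have eψo : ∀ x y, x ≠ v → y ≠ v → ψ x y = φ' x y := by
    intro x y hx hy; simp [hψdef, hx, hy]
  refine ⟨ψ, ?_, ?_⟩
  · -- it is a proper incidence coloring
    intro p q r w hpq hrs hne hdis
    by_cases hp : p = v
    · subst p
      have hq : q ≠ v := hpq.ne'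
      by_cases hr : r = v
      · subst r
        have hqw : q ≠ w := by intro h; exact hne (by rw [h])
        rw [eψa, eψa]
        exact Paa q w hpq hrs hqw
      · by_cases hw : w = v
        · subst w
          rw [eψa, eψb r hr]
          exact Pab q r hpq hrs.symm
        · rw [eψa, eψo r w hr hw]
          rcases hdis with h|h|h|h
          · exact absurd h.symm hr
          · rw [Sym2.eq_iff] at h
            rcases h with ⟨h1, h2⟩|⟨h1, h2⟩
            · exact absurd h1.symm hr
            · exact absurd h1.symm hw
          · rw [Sym2.eq_iff] at h
            rcases h with ⟨h1, h2⟩|⟨h1, h2⟩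
            · rw [h2]
              intro hc
              exact (Pmem q hpq).1 (hc ▸ hAmem (h2 ▸ hrs) hw)
            · exact absurd h1.symm hq
          · rw [Sym2.eq_iff] at h
            rcases h with ⟨h1, h2⟩|⟨h1, h2⟩
            · exact absurd h1.symm hr
            · exact absurd h1.symm hw
    · by_cases hq : q = v
      · subst q
        rw [eψb p hp]
        by_cases hr : r = v
        · subst r
          rw [eψa]
          exact (Pab w p hrs hpq.symm).symm
        · by_cases hw : w = v
          · subst w
            exfalso
            have hpr : p ≠ r := by intro h; exact hne (by rw [h])
            rcases hdis with h|h|h|h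
            · exact hpr h
            · rw [Sym2.eq_iff] at h
              rcases h with ⟨h1, h2⟩|⟨h1, h2⟩
              · exact hpr h1
              · exact hp h1
            · rw [Sym2.eq_iff] at h
              rcases h with ⟨h1, h2⟩|⟨h1, h2⟩
              · exact hr h2
              · exact hp h1
            · rw [Sym2.eq_iff] at h
              rcases h with ⟨h1, h2⟩|⟨h1, h2⟩
              · exact hr h2
              · exact hp h1
          · rw [eψo r w hr hw]
            rcases hdis with h|h|h|h
            · rw [← h]
              have hpw : G.Adj p w := by rw [h]; exact hrs
              intro hc
              exact (Pmem p hpq.symm).2.2.1 (hc ▸ hAmem hpw hw)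
            · rw [Sym2.eq_iff] at h
              rcases h with ⟨h1, h2⟩|⟨h1, h2⟩
              · exact absurd h2.symm hw
              · exact absurd h2.symm hr
            · rw [Sym2.eq_iff] at h
              rcases h with ⟨h1, h2⟩|⟨h1, h2⟩
              · exact absurd h2 hr
              · exact absurd h1 hp
            · rw [Sym2.eq_iff] at h
              rcases h with ⟨h1, h2⟩|⟨h1, h2⟩
              · rw [← h1]
                have hpw : G.Adj p w := by rw [h1]; exact hrs
                intro hc
                exact (Pmem p hpq.symm).2.2.1 (hc ▸ hAmem hpw hw)
              · rw [← h1]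
                have hrp : G.Adj r p := by rw [h1]; exact hrs
                intro hc
                exact (Pmem p hpq.symm).2.2.2 (hc ▸ hBmem hrp.symm hr)
      · by_cases hr : r = v
        · subst r
          rw [eψo p q hp hq, eψa]
          rcases hdis with h|h|h|h
          · exact absurd h hp
          · rw [Sym2.eq_iff] at h
            rcases h with ⟨h1, h2⟩|⟨h1, h2⟩
            · exact absurd h1 hp
            · exact absurd h2 hq
          · rw [Sym2.eq_iff] at h
            rcases h with ⟨h1, h2⟩|⟨h1, h2⟩
            · exact absurd h2.symm hq
            · exact absurd h1 hpq.ne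
          · rw [Sym2.eq_iff] at h
            rcases h with ⟨h1, h2⟩|⟨h1, h2⟩
            · exact absurd h1 hp
            · rw [h1]
              have hwq : G.Adj w q := by rw [← h1]; exact hpq
              intro hc
              exact (Pmem w hrs).1 (hc ▸ hAmem hwq hq)
        · by_cases hw : w = v
          · subst w
            rw [eψo p q hp hq, eψb r hr]
            rcases hdis with h|h|h|h
            · rw [h]
              have hrq : G.Adj r q := by rw [← h]; exact hpq
              intro hc
              exact (Pmem r hrs.symm).2.2.1 (hc ▸ hAmem hrq hq)
            · rw [Sym2.eq_iff] at h
              rcases h with ⟨h1, h2⟩|⟨h1, h2⟩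
              · exact absurd h2 hq
              · exact absurd h1 hp
            · rw [Sym2.eq_iff] at h
              rcases h with ⟨h1, h2⟩|⟨h1, h2⟩
              · rw [← h2]
                have hpr : G.Adj p r := by rw [h2]; exact hpq
                intro hc
                exact (Pmem r hrs.symm).2.2.2 (hc ▸ hBmem hpr.symm hp)
              · exact absurd h1 hpq.ne
            · rw [Sym2.eq_iff] at h
              rcases h with ⟨h1, h2⟩|⟨h1, h2⟩
              · exact absurd h2 hr
              · exact absurd h1 hp
          · rw [eψo p q hp hq, eψo r w hr hw]
            exact hold p q r w hp hq hr hw hpq hrs hne hdis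
  · -- at most 6 colors toward every vertex
    intro w
    by_cases hwv : w = v
    · subst w
      have hsub : {c : Fin (k+6) | ∃ u, G.Adj u v ∧ ψ u v = c} ⊆
          ↑((G.neighborFinset v).image bb) := by
        rintro c ⟨u, hu, hc⟩
        rw [Finset.coe_image]
        exact ⟨u, Finset.mem_coe.mpr (hNmem hu.symm), by rw [← hc, eψb u hu.ne]⟩
      calc ({c : Fin (k+6) | ∃ u, G.Adj u v ∧ ψ u v = c}).ncard
          ≤ (↑((G.neighborFinset v).image bb) : Set (Fin (k+6))).ncard :=
            Set.ncard_le_ncard hsub (Set.toFinite _)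
        _ = ((G.neighborFinset v).image bb).card := Set.ncard_coe_finset _
        _ ≤ 6 := by
            have h1 : ((G.neighborFinset v).image bb).card ≤ (G.neighborFinset v).card :=
              Finset.card_image_le
            rw [G.card_neighborFinset_eq_degree, hdv] at h1
            omega
    · by_cases hadj : G.Adj v w
      · have hsub : {c : Fin (k+6) | ∃ u, G.Adj u w ∧ ψ u w = c} ⊆
            ↑(B w ∪ {aa w}) := by
          rintro c ⟨u, hu, hc⟩
          rw [Finset.coe_union]
          by_cases huv : u = v
          · subst u
            exact Or.inr (by simp [← hc, eψa])
          · exact Or.inl (Finset.mem_coe.mpr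
              (by rw [← hc, eψo u w huv hwv]; exact hBmem hu.symm huv))
        calc ({c : Fin (k+6) | ∃ u, G.Adj u w ∧ ψ u w = c}).ncard
            ≤ (↑(B w ∪ {aa w}) : Set (Fin (k+6))).ncard :=
              Set.ncard_le_ncard hsub (Set.toFinite _)
          _ = (B w ∪ {aa w}).card := Set.ncard_coe_finset _
          _ ≤ 6 := (Pmem w hadj).2.1
      · have hsub : {c : Fin (k+6) | ∃ u, G.Adj u w ∧ ψ u w = c} ⊆
            ↑(B w) := by
          rintro c ⟨u, hu, hc⟩
          have huv : u ≠ v := by intro h; rw [h] at hu; exact hadj hu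
          exact Finset.mem_coe.mpr
            (by rw [← hc, eψo u w huv hwv]; exact hBmem hu.symm huv)
        calc ({c : Fin (k+6) | ∃ u, G.Adj u w ∧ ψ u w = c}).ncard
            ≤ (↑(B w) : Set (Fin (k+6))).ncard :=
              Set.ncard_le_ncard hsub (Set.toFinite _)
          _ = (B w).card := Set.ncard_coe_finset _
          _ ≤ 6 := hBcard w hwv
end

section
/- Let k ≥ 8 be an integer and let G be a finite simple graph with Δ(G) ≤ k. Suppose G contains a vertex v of degree 7 having at least six neighbors of degree at most 5. If G − v admits an incidence (k+7, 7)-coloring, then G admits an incidence (k+7, 7)-coloring. -/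
open SimpleGraph

/-! Extend the coloring of `G - v` to the incidences at `v`. For the one neighbor `u` that may have
large degree, first reserve a color `d₀` for `(u, uv)` outside the colors at `u`. Then give the
incidences `(v, vb)` distinct colors `c b`, avoiding `d₀` and the colors leaving `b`, and preferring
a color already entering `b`. This preference keeps at most 7 colors entering `u`; for a neighbor
`b` of degree at most 5 it either saves a color or puts every color entering `b` among those already
excluded, and either way one of the `k + 7 ≥ 15` colors stays free for `(b, bv)`. -/

open Finset

namespace Finset

variable {α : Type*} [DecidableEq α]

theorem exists_mem_forall_ne_imp_of_card_le {s : Finset α} {p : α → Prop}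
    [DecidablePred p] (hs : s.Nonempty) (h : #s ≤ #(s.filter p) + 1) :
    ∃ u ∈ s, ∀ b ∈ s, b ≠ u → p b := by
  by_cases hall : ∀ b ∈ s, p b
  · obtain ⟨u, hu⟩ := hs
    exact ⟨u, hu, fun b hb _ => hall b hb⟩
  push Not at hall
  obtain ⟨u, hu, hpu⟩ := hall
  refine ⟨u, hu, fun b hb hbu => by_contra fun hpb => ?_⟩
  have hpair : ({u, b} : Finset α) ⊆ s.filter (¬p ·) := by
    simp [insert_subset_iff, hu, hb, hpu, hpb]
  have := card_le_card hpair
  rw [card_pair hbu.symm] at this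
  have := card_filter_add_card_filter_not (s := s) p
  omega

omit [DecidableEq α] in
theorem exists_notMem_of_card_lt [Fintype α] {s : Finset α} (h : #s < Fintype.card α) :
    ∃ x, x ∉ s := by
  obtain ⟨x, -, hx⟩ := exists_mem_notMem_of_card_lt_card (s := s) (t := univ) (by rwa [card_univ])
  exact ⟨x, hx⟩

theorem exists_notMem_and_mem_or_subset [Fintype α] {F : Finset α} (P : Finset α)
    (h : #F < Fintype.card α) : ∃ x ∉ F, x ∈ P ∨ P ⊆ F := by
  by_cases hP : (P \ F).Nonempty
  · obtain ⟨x, hx⟩ := hP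
    rw [mem_sdiff] at hx
    exact ⟨x, hx.2, Or.inl hx.1⟩
  · obtain ⟨x, hx⟩ := exists_notMem_of_card_lt h
    exact ⟨x, hx, Or.inr (sdiff_eq_empty_iff_subset.mp (not_nonempty_iff_eq_empty.mp hP))⟩

theorem exists_injOn_avoid_prefer {ι : Type*} [DecidableEq ι] [Fintype α] [Nonempty α]
    (F P : ι → Finset α) (s : Finset ι) (B : Finset α) (h : ∀ i ∈ s, #(F i) + #B + #s ≤ Fintype.card α) :
    ∃ c : ι → α, Set.InjOn c s ∧ ∀ i ∈ s,
      c i ∉ F i ∧ c i ∉ B ∧ (c i ∈ P i ∨ P i ⊆ F i ∪ B ∪ s.image c) := by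
  induction s using Finset.induction_on generalizing B with
  | empty => exact ⟨fun _ => Classical.arbitrary α, by simp, by simp⟩
  | insert a s ha ih =>
    have hs := h a (mem_insert_self a s)
    rw [card_insert_of_notMem ha] at h hs
    obtain ⟨x, hxFB, hxP⟩ := exists_notMem_and_mem_or_subset (P a)
      ((card_union_le (F a) B).trans_lt (by omega))
    obtain ⟨c, hc, hcs⟩ := ih (insert x B) fun i hi => by
      have := h i (mem_insert_of_mem hi)
      have := card_insert_le x B
      omega
    have hcx : ∀ i ∈ s, c i ≠ x := fun i hi hi' => (hcs i hi).2.1 (hi' ▸ mem_insert_self x B)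
    have hupd : ∀ i ∈ s, Function.update c a x i = c i := fun i hi =>
      Function.update_of_ne (ne_of_mem_of_not_mem hi ha) _ _
    have himage : (insert a s).image (Function.update c a x) = insert x (s.image c) := by
      rw [image_insert, Function.update_self, image_congr hupd]
    refine ⟨Function.update c a x, ?_, ?_⟩
    · rw [coe_insert, Set.injOn_insert (by simpa using ha)]
      refine ⟨(hc.congr fun i hi => (hupd i hi).symm), ?_⟩
      rintro ⟨i, hi, hix⟩
      rw [Function.update_self, hupd i hi] at hix
      exact hcx i hi hix
    rw [himage]
    intro i hi
    rcases mem_insert.mp hi with rfl | hi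
    · rw [Function.update_self]
      simp only [mem_union, not_or] at hxFB
      exact ⟨hxFB.1, hxFB.2, hxP.imp_right fun hP => hP.trans subset_union_left⟩
    · obtain ⟨hF, hB, hP⟩ := hcs i hi
      rw [hupd i hi]
      refine ⟨hF, fun h => hB (mem_insert_of_mem h), hP.imp_right fun hP => hP.trans ?_⟩
      intro y
      simp only [mem_union, mem_insert]
      tauto

theorem card_union_union_lt_of_mem_or_subset {F P B C : Finset α} {m : ℕ} {x : α}
    (hP : #P ≤ m) (hB : #B < m) (hx : x ∈ C) (h : x ∈ P ∨ P ⊆ F ∪ B ∪ C) :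
    #(F ∪ P ∪ C) < #F + m + #C := by
  rcases h with hxP | hPsub
  · have hPC : 0 < #(P ∩ C) := card_pos.mpr ⟨x, mem_inter.mpr ⟨hxP, hx⟩⟩
    have := card_union_add_card_inter P C
    have := card_union_le F (P ∪ C)
    rw [union_assoc]
    omega
  · have hsub : F ∪ P ∪ C ⊆ F ∪ B ∪ C :=
      union_subset (union_subset (subset_union_left.trans subset_union_left) hPsub)
        subset_union_right
    have := card_le_card hsub
    have := card_union_le (F ∪ B) C
    have := card_union_le F B
    omega

theorem card_insert_le_of_mem_or_subset {F P B C : Finset α} {x : α} (hPF : Disjoint P F)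
    (hPB : Disjoint P B) (hx : x ∈ C) (h : x ∈ P ∨ P ⊆ F ∪ B ∪ C) :
    #(insert x P) ≤ max #P #C := by
  rcases h with hxP | hPsub
  · rw [insert_eq_of_mem hxP]
    exact le_max_left _ _
  · have hPC : P ⊆ C := fun y hy => by
      have := hPsub hy
      simp only [mem_union] at this
      rcases this with (hF | hB) | hC
      · exact absurd hF (disjoint_left.mp hPF hy)
      · exact absurd hB (disjoint_left.mp hPB hy)
      · exact hC
    exact (card_le_card (insert_subset hx hPC)).trans (le_max_right _ _)

end Finset

/-- `F b` and `P b` stand for the colors leaving and entering a neighbor `b` of the vertex being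
colored; all neighbors but `u` have few of them. -/
theorem exists_injOn_extension_colors {ι α : Type*} [DecidableEq ι] [DecidableEq α] [Fintype α]
    {N : Finset ι} {u : ι} (hu : u ∈ N) (F P : ι → Finset α) {m ℓ : ℕ}
    (hPFu : Disjoint (P u) (F u)) (hFPu : #(F u) + #(P u) < Fintype.card α)
    (hFu : #(F u) + 1 + #N ≤ Fintype.card α) (hPu : #(P u) ≤ ℓ)
    (hsmall : ∀ b ∈ N, b ≠ u → #(F b) ≤ m ∧ #(P b) ≤ m)
    (hN : #N ≤ ℓ) (hm : 1 < m) (hmℓ : m < ℓ) (hα : 2 * m + #N ≤ Fintype.card α) :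
    ∃ c : ι → α, Set.InjOn c N ∧ ∀ b ∈ N,
      c b ∉ F b ∧ #(insert (c b) (P b)) ≤ ℓ ∧ ∃ x, x ∉ F b ∪ P b ∪ N.image c := by
  obtain ⟨d₀, hd₀⟩ := exists_notMem_of_card_lt ((card_union_le _ _).trans_lt hFPu)
  have : Nonempty α := ⟨d₀⟩
  obtain ⟨c, hc, hcs⟩ := exists_injOn_avoid_prefer F P N {d₀} fun b hb => by
    rw [card_singleton]
    rcases eq_or_ne b u with rfl | hbu
    · exact hFu
    · have := (hsmall b hb hbu).1
      omega
  have hC : #(N.image c) ≤ ℓ := card_image_le.trans hN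
  refine ⟨c, hc, fun b hb => ⟨(hcs b hb).1, ?_, ?_⟩⟩
  all_goals rcases eq_or_ne b u with rfl | hbu
  · exact (card_insert_le_of_mem_or_subset hPFu
      (disjoint_singleton_right.mpr fun h => hd₀ (mem_union_right _ h))
      (mem_image_of_mem c hb) (hcs b hb).2.2).trans (max_le hPu hC)
  · have := (hsmall b hb hbu).2
    have := card_insert_le (c b) (P b)
    omega
  · refine ⟨d₀, fun h => ?_⟩
    rcases mem_union.mp h with h | h
    · exact hd₀ h
    · obtain ⟨i, hi, hid⟩ := mem_image.mp h
      exact (hcs i hi).2.1 (by simp [hid])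
  · obtain ⟨hF, hP⟩ := hsmall b hb hbu
    refine exists_notMem_of_card_lt <| (card_union_union_lt_of_mem_or_subset hP
      (by simpa using hm) (mem_image_of_mem c hb) (hcs b hb).2.2).trans_le ?_
    have := card_image_le (s := N) (f := c)
    omega

theorem isIncidenceColoring_iff {V : Type*} (G : SimpleGraph V) {n : ℕ} (φ : V → V → Fin n) :
    IsIncidenceColoring G φ ↔
      (∀ ⦃a b x⦄, G.Adj a b → G.Adj a x → b ≠ x → φ a b ≠ φ a x) ∧
      ∀ ⦃a b x⦄, G.Adj a b → G.Adj b x → φ a b ≠ φ b x := by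
  refine ⟨fun h => ⟨fun a b x hab hax hbx => h hab hax (by simpa using hbx) (Or.inl rfl),
    fun a b x hab hbx => h hab hbx (by simp [hab.ne]) (by simp)⟩, ?_⟩
  rintro ⟨hA, hB⟩ a b w x hab hwx hne hcond
  rcases hcond with rfl | h | h | h
  · exact hA hab hwx (by simpa using hne)
  · rcases Sym2.eq_iff.mp h with ⟨rfl, rfl⟩ | ⟨rfl, rfl⟩
    · exact absurd rfl hne
    · exact hB hab hwx
  · rcases Sym2.eq_iff.mp h with ⟨-, rfl⟩ | ⟨rfl, -⟩
    · exact hB hab hwx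
    · exact absurd hab G.irrefl
  · rcases Sym2.eq_iff.mp h with ⟨rfl, rfl⟩ | ⟨rfl, -⟩
    · exact absurd hwx G.irrefl
    · exact (hB hwx hab).symm

theorem HasIncidenceColoring.of_induce {V : Type*} {H : SimpleGraph V} {s : Set V}
    (hs : ∀ ⦃a b⦄, H.Adj a b → a ∈ s) {n ℓ : ℕ} [NeZero n]
    (h : HasIncidenceColoring (H.induce s) n ℓ) : HasIncidenceColoring H n ℓ := by
  classical
  obtain ⟨φ, hφ, hφℓ⟩ := h
  let ψ : V → V → Fin n := fun a b => if h : a ∈ s ∧ b ∈ s then φ ⟨a, h.1⟩ ⟨b, h.2⟩ else 0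
  have hψ : ∀ {a b} (hab : H.Adj a b), ψ a b = φ ⟨a, hs hab⟩ ⟨b, hs hab.symm⟩ := fun hab => by
    simp [ψ, hs hab, hs hab.symm]
  refine ⟨ψ, ?_, fun y => ?_⟩
  · obtain ⟨hA, hB⟩ := (isIncidenceColoring_iff _ φ).mp hφ
    refine (isIncidenceColoring_iff H ψ).mpr ⟨fun a b x hab hax hbx => ?_, fun a b x hab hbx => ?_⟩
    · rw [hψ hab, hψ hax]
      exact hA (a := ⟨a, hs hab⟩) (b := ⟨b, hs hab.symm⟩) (x := ⟨x, hs hax.symm⟩) hab hax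
        (by simpa using hbx)
    · rw [hψ hab, hψ hbx]
      exact hB (a := ⟨a, hs hab⟩) (b := ⟨b, hs hab.symm⟩) (x := ⟨x, hs hbx.symm⟩) hab hbx
  · by_cases hy : y ∈ s
    · convert hφℓ ⟨y, hy⟩ using 2
      ext c
      constructor
      · rintro ⟨u, hu, rfl⟩
        exact ⟨⟨u, hs hu⟩, hu, (hψ hu).symm⟩
      · rintro ⟨⟨u, _⟩, hu, rfl⟩
        exact ⟨u, hu, hψ hu⟩
    · convert Nat.zero_le ℓ
      rw [Set.ncard_eq_zero]
      ext c
      simp only [Set.mem_ofPred_eq, Set.mem_empty_iff_false, iff_false, not_exists, not_and]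
      exact fun u hu => absurd (hs hu.symm) hy

theorem HasIncidenceColoring.deleteIncidenceSet {V : Type*} {G : SimpleGraph V} {v : V}
    {n ℓ : ℕ} [NeZero n] (h : HasIncidenceColoring (G.induce {v}ᶜ) n ℓ) :
    HasIncidenceColoring (G.deleteIncidenceSet v) n ℓ :=
  .of_induce (s := {v}ᶜ) (fun _ _ hab => (SimpleGraph.deleteIncidenceSet_adj.mp hab).2.1)
    (by rwa [G.induce_deleteIncidenceSet_of_notMem (by simp)])

namespace SimpleGraph

variable {V : Type*} [Fintype V] (G : SimpleGraph V) [DecidableRel G.Adj] {n : ℕ}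

def outColors (φ : V → V → Fin n) (u : V) : Finset (Fin n) :=
  (G.neighborFinset u).image (φ u)

def inColors (φ : V → V → Fin n) (u : V) : Finset (Fin n) :=
  (G.neighborFinset u).image fun x => φ x u

variable {G}

theorem mem_outColors {φ : V → V → Fin n} {u : V} {c : Fin n} :
    c ∈ G.outColors φ u ↔ ∃ x, G.Adj u x ∧ φ u x = c := by
  simp [outColors]

theorem mem_inColors {φ : V → V → Fin n} {u : V} {c : Fin n} :
    c ∈ G.inColors φ u ↔ ∃ x, G.Adj x u ∧ φ x u = c := by
  simp [inColors, adj_comm]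

theorem card_outColors_le (φ : V → V → Fin n) (u : V) : #(G.outColors φ u) ≤ G.degree u :=
  card_image_le

theorem card_inColors_le (φ : V → V → Fin n) (u : V) : #(G.inColors φ u) ≤ G.degree u :=
  card_image_le

theorem hasIncidenceColoring_iff {ℓ : ℕ} :
    HasIncidenceColoring G n ℓ ↔
      ∃ φ : V → V → Fin n, IsIncidenceColoring G φ ∧ ∀ y, #(G.inColors φ y) ≤ ℓ := by
  have hcoe : ∀ (φ : V → V → Fin n) y,
      ({c | ∃ u, G.Adj u y ∧ φ u y = c} : Set (Fin n)) = G.inColors φ y := fun φ y => by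
    ext c
    simp [mem_inColors]
  simp only [HasIncidenceColoring, hcoe, Set.ncard_coe_finset]

theorem _root_.IsIncidenceColoring.disjoint_inColors_outColors {φ : V → V → Fin n}
    (hφ : IsIncidenceColoring G φ) (u : V) : Disjoint (G.inColors φ u) (G.outColors φ u) := by
  refine Finset.disjoint_left.mpr fun c hin hout => ?_
  obtain ⟨x, hxu, rfl⟩ := mem_inColors.mp hin
  obtain ⟨y, huy, hy⟩ := mem_outColors.mp hout
  exact ((isIncidenceColoring_iff G φ).mp hφ).2 hxu huy hy.symm

variable [DecidableEq V]

theorem neighborFinset_deleteIncidenceSet {v b : V} (hb : b ≠ v) :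
    (G.deleteIncidenceSet v).neighborFinset b = (G.neighborFinset b).erase v := by
  ext x
  simp [deleteIncidenceSet_adj, hb, and_comm]

theorem degree_deleteIncidenceSet_of_adj {v b : V} (h : G.Adj v b) :
    (G.deleteIncidenceSet v).degree b = G.degree b - 1 := by
  rw [← card_neighborFinset_eq_degree, ← card_neighborFinset_eq_degree,
    neighborFinset_deleteIncidenceSet h.ne', card_erase_of_mem (by simpa using h.symm)]

theorem card_outColors_deleteIncidenceSet_le {v b : V} (h : G.Adj v b) (φ : V → V → Fin n) :
    #((G.deleteIncidenceSet v).outColors φ b) ≤ G.degree b - 1 :=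
  (card_outColors_le φ b).trans (degree_deleteIncidenceSet_of_adj h).le

theorem card_inColors_deleteIncidenceSet_le {v b : V} (h : G.Adj v b) (φ : V → V → Fin n) :
    #((G.deleteIncidenceSet v).inColors φ b) ≤ G.degree b - 1 :=
  (card_inColors_le φ b).trans (degree_deleteIncidenceSet_of_adj h).le

end SimpleGraph

section Extension

variable {V : Type*} [DecidableEq V] {n : ℕ}

def extendAt (ψ : V → V → Fin n) (v : V) (c d : V → Fin n) : V → V → Fin n :=
  fun a b => if a = v then c b else if b = v then d a else ψ a b

theorem isIncidenceColoring_extendAt {G : SimpleGraph V} {ψ : V → V → Fin n} {v : V}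
    {c d : V → Fin n} (hψ : IsIncidenceColoring (G.deleteIncidenceSet v) ψ)
    (hc : Set.InjOn c (G.neighborSet v)) (hcd : ∀ ⦃a b⦄, G.Adj v a → G.Adj v b → d a ≠ c b)
    (hc_out : ∀ ⦃b x⦄, G.Adj v b → (G.deleteIncidenceSet v).Adj b x → c b ≠ ψ b x)
    (hd_out : ∀ ⦃a x⦄, G.Adj v a → (G.deleteIncidenceSet v).Adj a x → d a ≠ ψ a x)
    (hd_in : ∀ ⦃a x⦄, G.Adj v a → (G.deleteIncidenceSet v).Adj x a → d a ≠ ψ x a) :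
    IsIncidenceColoring G (extendAt ψ v c d) := by
  obtain ⟨hA, hB⟩ := (isIncidenceColoring_iff _ ψ).mp hψ
  have hdel : ∀ ⦃a b⦄, G.Adj a b → a ≠ v → b ≠ v → (G.deleteIncidenceSet v).Adj a b :=
    fun a b hab ha hb => deleteIncidenceSet_adj.mpr ⟨hab, ha, hb⟩
  refine (isIncidenceColoring_iff G _).mpr ⟨fun a b x hab hax hbx => ?_, fun a b x hab hbx => ?_⟩
  all_goals simp only [extendAt]
  · by_cases ha : a = v
    · subst ha
      simpa using hc.ne hab hax hbx
    by_cases hb : b = v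
    · subst hb
      have hx : x ≠ b := hbx.symm
      simpa [ha, hx] using hd_out hab.symm (hdel hax ha hx)
    by_cases hx : x = v
    · subst hx
      simpa [ha, hb] using (hd_out hax.symm (hdel hab ha hb)).symm
    simpa [ha, hb, hx] using hA (hdel hab ha hb) (hdel hax ha hx) hbx
  · by_cases ha : a = v
    · subst ha
      have hb : b ≠ a := hab.ne'
      by_cases hx : x = a
      · subst hx
        simpa [hb] using (hcd hab hab).symm
      simpa [hb, hx] using hc_out hab (hdel hbx hb hx)
    by_cases hb : b = v
    · subst hb
      simpa [ha] using hcd hab.symm hbx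
    by_cases hx : x = v
    · subst hx
      simpa [ha, hb] using (hd_in hbx.symm (hdel hab ha hb)).symm
    simpa [ha, hb, hx] using hB (hdel hab ha hb) (hdel hbx hb hx)

variable [Fintype V] {G : SimpleGraph V} [DecidableRel G.Adj]

theorem card_inColors_extendAt_le {ψ : V → V → Fin n} {v : V} {c d : V → Fin n} {ℓ : ℕ}
    (hψℓ : ∀ y, #((G.deleteIncidenceSet v).inColors ψ y) ≤ ℓ) (hv : G.degree v ≤ ℓ)
    (hc_in : ∀ b, G.Adj v b → #(insert (c b) ((G.deleteIncidenceSet v).inColors ψ b)) ≤ ℓ)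
    (y : V) : #(G.inColors (extendAt ψ v c d) y) ≤ ℓ := by
  by_cases hy : y = v
  · subst hy
    exact (card_inColors_le _ _).trans hv
  have hold : ∀ x, G.Adj x y → x ≠ v →
      extendAt ψ v c d x y ∈ (G.deleteIncidenceSet v).inColors ψ y := fun x hxy hx => by
    simp only [extendAt, if_neg hx, if_neg hy]
    exact mem_inColors.mpr ⟨x, deleteIncidenceSet_adj.mpr ⟨hxy, hx, hy⟩, rfl⟩
  by_cases hvy : G.Adj v y
  · refine (card_le_card fun col hcol => ?_).trans (hc_in y hvy)
    obtain ⟨x, hxy, rfl⟩ := mem_inColors.mp hcol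
    by_cases hx : x = v
    · subst hx
      simp [extendAt]
    · exact mem_insert_of_mem (hold x hxy hx)
  · refine (card_le_card fun col hcol => ?_).trans (hψℓ y)
    obtain ⟨x, hxy, rfl⟩ := mem_inColors.mp hcol
    exact hold x hxy (by rintro rfl; exact hvy hxy)

theorem hasIncidenceColoring_of_extendAt {ψ : V → V → Fin n} {v : V} {c : V → Fin n} {ℓ : ℕ}
    (hψ : IsIncidenceColoring (G.deleteIncidenceSet v) ψ)
    (hψℓ : ∀ y, #((G.deleteIncidenceSet v).inColors ψ y) ≤ ℓ) (hv : G.degree v ≤ ℓ)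
    (hc : Set.InjOn c (G.neighborFinset v))
    (hc_out : ∀ b ∈ G.neighborFinset v, c b ∉ (G.deleteIncidenceSet v).outColors ψ b)
    (hc_in : ∀ b ∈ G.neighborFinset v,
      #(insert (c b) ((G.deleteIncidenceSet v).inColors ψ b)) ≤ ℓ)
    (hd : ∀ a ∈ G.neighborFinset v, ∃ x, x ∉ (G.deleteIncidenceSet v).outColors ψ a ∪
      (G.deleteIncidenceSet v).inColors ψ a ∪ (G.neighborFinset v).image c) :
    HasIncidenceColoring G n ℓ := by
  simp only [mem_neighborFinset] at hc_out hc_in hd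
  have : Nonempty (Fin n) := ⟨c v⟩
  choose! d hd using hd
  refine hasIncidenceColoring_iff.mpr ⟨extendAt ψ v c d, ?_, card_inColors_extendAt_le hψℓ hv hc_in⟩
  refine isIncidenceColoring_extendAt hψ (by simpa using hc) (fun a b ha hb h => hd a ha ?_)
    (fun b x hb hbx h => hc_out b hb ?_) (fun a x ha hax h => hd a ha ?_)
    (fun a x ha hxa h => hd a ha ?_)
  · exact mem_union_right _ (mem_image.mpr ⟨b, by simpa using hb, h.symm⟩)
  · exact mem_outColors.mpr ⟨x, hbx, h.symm⟩
  · exact mem_union_left _ (mem_union_left _ (mem_outColors.mpr ⟨x, hax, h.symm⟩))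
  · exact mem_union_left _ (mem_union_right _ (mem_inColors.mpr ⟨x, hxa, h.symm⟩))

end Extension

theorem incidence_extend_seven_vertex_six_small {V : Type*} [Fintype V] [DecidableEq V]
    (G : SimpleGraph V) [DecidableRel G.Adj] (k : ℕ) (hk : 8 ≤ k) (hΔ : G.maxDegree ≤ k)
    (v : V) (hdv : G.degree v = 7)
    (hnb : 6 ≤ ((G.neighborFinset v).filter (fun w => G.degree w ≤ 5)).card)
    (hcol : HasIncidenceColoring (G.induce ({v}ᶜ : Set V)) (k + 7) 7) :
    HasIncidenceColoring G (k + 7) 7 := by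
  set H := G.deleteIncidenceSet v
  obtain ⟨ψ, hψ, hψℓ⟩ : ∃ ψ : V → V → Fin (k + 7),
      IsIncidenceColoring H ψ ∧ ∀ y, #(H.inColors ψ y) ≤ 7 :=
    hasIncidenceColoring_iff.mp hcol.deleteIncidenceSet
  obtain ⟨u, hu, hsmall⟩ := (G.neighborFinset v).exists_mem_forall_ne_imp_of_card_le
    (p := fun w => G.degree w ≤ 5) (card_pos.mp (by simp [hdv]))
    (by rw [card_neighborFinset_eq_degree]; omega)
  have hout : ∀ b ∈ G.neighborFinset v, #(H.outColors ψ b) ≤ G.degree b - 1 := fun b hb =>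
    card_outColors_deleteIncidenceSet_le ((G.mem_neighborFinset v b).mp hb) ψ
  have hin : ∀ b ∈ G.neighborFinset v, #(H.inColors ψ b) ≤ G.degree b - 1 := fun b hb =>
    card_inColors_deleteIncidenceSet_le ((G.mem_neighborFinset v b).mp hb) ψ
  have hu_out : #(H.outColors ψ u) ≤ k - 1 :=
    (hout u hu).trans (by have := (G.degree_le_maxDegree u).trans hΔ; omega)
  have hu_in := hψℓ u
  have hN : #(G.neighborFinset v) = 7 := by rw [card_neighborFinset_eq_degree, hdv]
  obtain ⟨c, hc, hcs⟩ := exists_injOn_extension_colors hu (H.outColors ψ) (H.inColors ψ)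
    (m := 4) (ℓ := 7) (hψ.disjoint_inColors_outColors u)
    (by rw [Fintype.card_fin]; omega) (by rw [Fintype.card_fin]; omega) hu_in
    (fun b hb hbu => by have := hsmall b hb hbu; have := hout b hb; have := hin b hb; omega)
    hN.le (by norm_num) (by norm_num) (by rw [Fintype.card_fin]; omega)
  exact hasIncidenceColoring_of_extendAt hψ hψℓ hdv.le hc (fun b hb => (hcs b hb).1)
    (fun b hb => (hcs b hb).2.1) (fun b hb => (hcs b hb).2.2)
end
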